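/- arXiv:math/0104210 — 2 statements merged into one kernel-verified Lean document; each statement's English description precedes it below -/
import Mathlib

section
/- The fan Σ_W is a smooth complete fan in ℤ^4 with G(Σ_W) = {e_0, …, e_6}, whose primitive collections are exactly {e_2, e_3, e_4}, {e_1, e_2, e_3}, {e_1, e_6}, {e_0, e_4, e_5}, {e_0, e_5, e_6}, with primitive relations e_2+e_3+e_4 = e_6, e_1+e_2+e_3 = e_5, e_1+e_6 = e_4+e_5, e_0+e_4+e_5 = 0, e_0+e_5+e_6 = e_2+e_3. In particular, the primitive collection {e_1, e_6} has degree 0, so Σ_W is not Fano. -/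
/-! ## Basic setup: cones and smooth complete fans in `ℤ^n` with ambient space `ℚ^n` -/

/-- The ambient rational vector space `ℚ^n`. -/
abbrev Vec (n : ℕ) := Fin n → ℚ

/-- The lattice `ℤ^n`. -/
abbrev LVec (n : ℕ) := Fin n → ℤ

/-- The natural inclusion `ℤ^n → ℚ^n`. -/
def toQ {n : ℕ} (v : LVec n) : Vec n := fun i => (v i : ℚ)

/-- The cone generated by a set `S ⊆ ℚ^n`: all nonnegative rational linear
combinations of elements of `S`. -/
def coneGen {n : ℕ} (S : Set (Vec n)) : Set (Vec n) :=
  {x | ∃ (T : Finset (Vec n)) (c : Vec n → ℚ),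
    ↑T ⊆ S ∧ (∀ s, 0 ≤ c s) ∧ x = ∑ s ∈ T, c s • s}

/-- `G` is a face of the cone `σ`: it is cut out on `σ` by a linear form
which is nonnegative on `σ`. -/
def IsFaceOf {n : ℕ} (G σ : Set (Vec n)) : Prop :=
  ∃ u : Vec n →ₗ[ℚ] ℚ, (∀ x ∈ σ, 0 ≤ u x) ∧ G = {x ∈ σ | u x = 0}

/-- A smooth complete fan in `ℤ^n`: a finite collection of cones in `ℚ^n`, each
generated by (the images of) a subset of some `ℤ`-basis of `ℤ^n`, closed under
taking faces, such that the intersection of two cones is a face of each, and whose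
union is all of `ℚ^n`. -/
structure IsSmoothCompleteFan {n : ℕ} (F : Set (Set (Vec n))) : Prop where
  finite : F.Finite
  smooth : ∀ σ ∈ F, ∃ (b : Module.Basis (Fin n) ℤ (LVec n)) (I : Finset (Fin n)),
    σ = coneGen (toQ '' (⇑b '' ↑I))
  faces : ∀ σ ∈ F, ∀ G, IsFaceOf G σ → G ∈ F
  inter : ∀ σ ∈ F, ∀ τ ∈ F, IsFaceOf (σ ∩ τ) σ ∧ IsFaceOf (σ ∩ τ) τ
  covers : ⋃₀ F = Set.univ

/-- A primitive lattice vector. -/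
def IsPrimitive {n : ℕ} (v : LVec n) : Prop :=
  v ≠ 0 ∧ ∀ (k : ℤ) (w : LVec n), v = k • w → IsUnit k

/-- `G(Σ)`: the set of primitive lattice generators of the rays of the fan. -/
def gens {n : ℕ} (F : Set (Set (Vec n))) : Set (LVec n) :=
  {v | IsPrimitive v ∧ coneGen {toQ v} ∈ F}

/-- A primitive collection of the fan `F`: a set `P` of ray generators such that
`P` does not generate a cone of `F`, but every proper subset obtained by removing
one element does. -/
def IsPrimCol {n : ℕ} (F : Set (Set (Vec n))) (P : Finset (LVec n)) : Prop :=
  ↑P ⊆ gens F ∧ coneGen (toQ '' ↑P) ∉ F ∧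
    ∀ x ∈ P, coneGen (toQ '' ↑(P.erase x)) ∈ F

/-- `HasPrimRel F P Y a` : the sum of the elements of `P` lies in the relative
interior of the cone of `F` generated by `Y`, with (positive integral) coordinates
`a y` on the generators `y ∈ Y`; i.e. the primitive relation of `P` is
`∑_{x ∈ P} x = ∑_{y ∈ Y} a y • y`. -/
def HasPrimRel {n : ℕ} (F : Set (Set (Vec n))) (P Y : Finset (LVec n))
    (a : LVec n → ℤ) : Prop :=
  ↑Y ⊆ gens F ∧ coneGen (toQ '' ↑Y) ∈ F ∧ (∀ y ∈ Y, 0 < a y) ∧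
    ∑ x ∈ P, x = ∑ y ∈ Y, a y • y

/-- The degree of a primitive collection `P` with primitive relation data `(Y, a)`:
`deg P = |P| - ∑ a_y`. -/
def degOf {n : ℕ} (P Y : Finset (LVec n)) (a : LVec n → ℤ) : ℤ :=
  (P.card : ℤ) - ∑ y ∈ Y, a y

/-- A fan is Fano if every primitive collection has strictly positive degree
(Batyrev's criterion). -/
def IsFano {n : ℕ} (F : Set (Set (Vec n))) : Prop :=
  ∀ P Y a, IsPrimCol F P → HasPrimRel F P Y a → 0 < degOf P Y a

/-- The star subdivision of the fan `F` at the cone generated by `T`, with new ray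
generated by `x = ∑_{t ∈ T} t`: its cones are the cones of `F` not containing the
cone of `T`, together with the cones generated by `{x} ∪ A` where `A` runs over the
generator sets of those faces, not containing the cone of `T`, of the cones of `F`
containing the cone of `T`. -/
def starSubdiv {n : ℕ} (F : Set (Set (Vec n))) (T : Finset (LVec n)) :
    Set (Set (Vec n)) :=
  {σ ∈ F | ¬ coneGen (toQ '' ↑T) ⊆ σ} ∪
  {ρ | ∃ A : Finset (LVec n), ↑A ⊆ gens F ∧
      (∃ σ ∈ F, coneGen (toQ '' ↑T) ⊆ σ ∧ IsFaceOf (coneGen (toQ '' (↑A : Set (LVec n)))) σ) ∧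
      ¬ coneGen (toQ '' ↑T) ⊆ coneGen (toQ '' (↑A : Set (LVec n))) ∧
      ρ = coneGen (toQ '' ↑(insert (∑ t ∈ T, t) A : Finset (LVec n)))}

/-- `F'` is obtained from `F` by a star subdivision at a cone of `F` of dimension
at least `2` (equivalently, the associated toric morphism is a blow-up along a
smooth invariant center). -/
def IsBlowup {n : ℕ} (F' F : Set (Set (Vec n))) : Prop :=
  ∃ T : Finset (LVec n), ↑T ⊆ gens F ∧ 2 ≤ T.card ∧
    coneGen (toQ '' ↑T) ∈ F ∧ F' = starSubdiv F T

/-- The fan `F'` refines the fan `F`: every cone of `F'` is contained in a cone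
of `F`. -/
def Refines {n : ℕ} (F' F : Set (Set (Vec n))) : Prop :=
  ∀ σ' ∈ F', ∃ σ ∈ F, σ' ⊆ σ

/-! ## The explicit construction in `ℤ^4` -/

/-- `e₁`, first standard basis vector of `ℤ^4`. -/
def e1 : LVec 4 := ![1, 0, 0, 0]
/-- `e₂`. -/
def e2 : LVec 4 := ![0, 1, 0, 0]
/-- `e₃`. -/
def e3 : LVec 4 := ![0, 0, 1, 0]
/-- `e₄`. -/
def e4 : LVec 4 := ![0, 0, 0, 1]
/-- `e₀ = -e₁ - e₂ - e₃ - e₄`. -/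
def e0 : LVec 4 := ![-1, -1, -1, -1]
/-- `e₅ = e₁ + e₂ + e₃`. -/
def e5 : LVec 4 := ![1, 1, 1, 0]
/-- `e₆ = e₂ + e₃ + e₄`. -/
def e6 : LVec 4 := ![0, 1, 1, 1]
/-- `e₇ = e₄ + e₅`. -/
def e7 : LVec 4 := ![1, 1, 1, 1]

/-- The fan of `ℙ^4`: its cones are generated by the proper subsets of
`{e₀, e₁, e₂, e₃, e₄}`. -/
def SigmaP4 : Set (Set (Vec 4)) :=
  {σ | ∃ S : Finset (LVec 4), S ⊂ ({e0, e1, e2, e3, e4} : Finset (LVec 4)) ∧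
    σ = coneGen (toQ '' ↑S)}

/-- `Σ_X`: the fan of `ℙ^4` blown up along the line `V(⟨e₁,e₂,e₃⟩)`, i.e. the star
subdivision of `Σ_{ℙ^4}` at the cone generated by `{e₁,e₂,e₃}`, with new ray
`e₅ = e₁ + e₂ + e₃`. -/
def SigmaX : Set (Set (Vec 4)) := starSubdiv SigmaP4 {e1, e2, e3}

/-- `Σ_W`: the star subdivision of `Σ_X` at the cone generated by `{e₂,e₃,e₄}`,
with new ray `e₆ = e₂ + e₃ + e₄`. -/
def SigmaW : Set (Set (Vec 4)) := starSubdiv SigmaX {e2, e3, e4}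

/-- `Σ_Y`: the star subdivision of `Σ_W` at the cone generated by `{e₄,e₅}`,
with new ray `e₇ = e₄ + e₅`. -/
def SigmaY : Set (Set (Vec 4)) := starSubdiv SigmaW {e4, e5}

/-!
Each fan is presented by its maximal cones, each spanned by a basis of `ℤ^4` recorded together
with its dual basis (a `Frame`). Coordinates in the dual basis decide membership in the cones of
a frame; this gives the faces, smoothness, and which rays lie in which cones. A star subdivision at
`cone T` replaces each maximal cone `M ⊇ T` by the cones on `{∑ T} ∪ M ∖ {t}`, `t ∈ T`, which
cover `cone M`, so completeness passes from `ℙ^4` to `Σ_W`. Two maximal cones of `Σ_W` meet in a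
common face because a linear form separates them. The primitive collections of `Σ_W` are then
the minimal sets of rays not contained in a maximal cone, found by a finite check, and the
relation `e₁ + e₆ = e₄ + e₅` has degree `2 - 2 = 0`.
-/

namespace ToricFan

open Finset

variable {n : ℕ}

lemma toQ_injective : Function.Injective (toQ (n := n)) :=
  fun _ _ h => funext fun i => Int.cast_injective (congrFun h i)

@[simp] lemma toQ_zero : toQ (0 : LVec n) = 0 := by
  ext; simp [toQ]

lemma toQ_sum (T : Finset (LVec n)) : toQ (∑ t ∈ T, t) = ∑ t ∈ T, toQ t := by
  ext; simp [toQ]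

lemma coneGen_eq_hull (S : Set (Vec n)) : coneGen S = PointedCone.hull ℚ S := by
  ext x
  constructor
  · rintro ⟨T, c, hTS, hc, rfl⟩
    exact Submodule.sum_mem _ fun s hs =>
      PointedCone.smul_mem _ (hc s) (PointedCone.subset_hull (hTS hs))
  · intro hx
    obtain ⟨c, T, hTS, -, rfl⟩ := Submodule.mem_span_iff_exists_finset_subset.mp hx
    exact ⟨T, fun s => c s, hTS, fun s => (c s).2, rfl⟩

def cone (B : Finset (LVec n)) : PointedCone ℚ (Vec n) := PointedCone.hull ℚ (toQ '' B)

@[simp] lemma coneGen_image_toQ (B : Finset (LVec n)) :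
    coneGen (toQ '' B) = (cone B : Set (Vec n)) :=
  coneGen_eq_hull _

lemma mem_cone_iff {B : Finset (LVec n)} {x : Vec n} :
    x ∈ cone B ↔ ∃ c : LVec n → ℚ, (∀ s, 0 ≤ c s) ∧ x = ∑ s ∈ B, c s • toQ s := by
  constructor
  · intro hx
    induction hx using Submodule.span_induction with
    | mem y hy =>
      obtain ⟨s, hs, rfl⟩ := hy
      refine ⟨fun t => if t = s then 1 else 0, fun t => by positivity, ?_⟩
      simp [ite_smul, Finset.sum_ite_eq', Finset.mem_coe.mp hs]
    | zero => exact ⟨0, fun _ => le_rfl, by simp⟩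
    | add y z _ _ hy hz =>
      obtain ⟨c, hc, rfl⟩ := hy
      obtain ⟨d, hd, rfl⟩ := hz
      exact ⟨c + d, fun s => add_nonneg (hc s) (hd s), by
        simp [add_smul, Finset.sum_add_distrib]⟩
    | smul a y _ hy =>
      obtain ⟨c, hc, rfl⟩ := hy
      exact ⟨fun s => a * c s, fun s => mul_nonneg a.2 (hc s), by
        simp [Finset.smul_sum, ← Nonneg.coe_smul, smul_smul]⟩
  · rintro ⟨c, hc, rfl⟩
    exact Submodule.sum_mem _ fun s hs =>
      PointedCone.smul_mem _ (hc s) (PointedCone.subset_hull ⟨s, hs, rfl⟩)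

lemma toQ_mem_cone {B : Finset (LVec n)} {s : LVec n} (hs : s ∈ B) : toQ s ∈ cone B :=
  PointedCone.subset_hull ⟨s, hs, rfl⟩

lemma cone_mono {A B : Finset (LVec n)} (h : A ⊆ B) : cone A ≤ cone B :=
  Submodule.span_mono (Set.image_mono (Finset.coe_subset.mpr h))

lemma mem_cone_singleton {v : LVec n} {x : Vec n} :
    x ∈ cone {v} ↔ ∃ q : ℚ, 0 ≤ q ∧ x = q • toQ v := by
  rw [mem_cone_iff]
  constructor
  · rintro ⟨c, hc, rfl⟩
    exact ⟨c v, hc v, by simp⟩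
  · rintro ⟨q, hq, rfl⟩
    exact ⟨fun _ => q, fun _ => hq, by simp⟩

def pairing (w : LVec n) : Vec n →ₗ[ℚ] ℚ where
  toFun x := toQ w ⬝ᵥ x
  map_add' := dotProduct_add (toQ w)
  map_smul' c x := dotProduct_smul c (toQ w) x

lemma pairing_toQ (w v : LVec n) : pairing w (toQ v) = ((w ⬝ᵥ v : ℤ) : ℚ) := by
  simp [pairing, toQ, dotProduct]

lemma mem_cone_filter_of_apply_eq_zero {B : Finset (LVec n)} {u : Vec n →ₗ[ℚ] ℚ}
    (hu : ∀ s ∈ B, 0 ≤ u (toQ s)) {x : Vec n} (hx : x ∈ cone B) (hux : u x = 0) :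
    x ∈ cone (B.filter fun s => u (toQ s) = 0) := by
  obtain ⟨c, hc, rfl⟩ := mem_cone_iff.mp hx
  have hterms : ∀ s ∈ B, c s * u (toQ s) = 0 := by
    refine (Finset.sum_eq_zero_iff_of_nonneg fun s hs => mul_nonneg (hc s) (hu s hs)).mp ?_
    simpa [map_sum] using hux
  rw [← Finset.sum_filter_add_sum_filter_not B fun s => u (toQ s) = 0]
  refine add_mem (Submodule.sum_mem _ fun s hs => PointedCone.smul_mem _ (hc s) (toQ_mem_cone hs))
    (Submodule.sum_mem _ fun s hs => ?_)
  rw [Finset.mem_filter] at hs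
  rw [(mul_eq_zero.mp (hterms s hs.1)).resolve_right hs.2, zero_smul]
  exact zero_mem _

lemma apply_nonneg_of_mem_cone {B : Finset (LVec n)} {u : Vec n →ₗ[ℚ] ℚ}
    (hu : ∀ s ∈ B, 0 ≤ u (toQ s)) {x : Vec n} (hx : x ∈ cone B) : 0 ≤ u x := by
  obtain ⟨c, hc, rfl⟩ := mem_cone_iff.mp hx
  simpa [map_sum] using Finset.sum_nonneg fun s hs => mul_nonneg (hc s) (hu s hs)

lemma exists_eq_cone_of_isFaceOf {B : Finset (LVec n)} {G : Set (Vec n)}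
    (h : IsFaceOf G (cone B)) : ∃ A ⊆ B, G = cone A := by
  obtain ⟨u, hu, rfl⟩ := h
  have hu' : ∀ s ∈ B, 0 ≤ u (toQ s) := fun s hs => hu _ (toQ_mem_cone hs)
  refine ⟨B.filter fun s => u (toQ s) = 0, Finset.filter_subset _ _, Set.ext fun x => ⟨?_, ?_⟩⟩
  · rintro ⟨hx, hux⟩
    exact mem_cone_filter_of_apply_eq_zero hu' hx hux
  · intro hx
    refine ⟨cone_mono (Finset.filter_subset _ _) hx, le_antisymm ?_ (hu x ?_)⟩
    · simpa using apply_nonneg_of_mem_cone (u := -u)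
        (fun s hs => by simp [(Finset.mem_filter.mp hs).2]) hx
    · exact cone_mono (Finset.filter_subset _ _) hx

/-- Subtract `c t • ∑ T` from `∑ s ∈ M, c s • s`, where `t ∈ T` minimizes `c` on `T`. -/
lemma exists_mem_cone_insert_sum_erase {T M : Finset (LVec n)} (hT : T.Nonempty) (hTM : T ⊆ M)
    {p : Vec n} (hp : p ∈ cone M) : ∃ t ∈ T, p ∈ cone (insert (∑ t ∈ T, t) (M.erase t)) := by
  obtain ⟨c, hc, rfl⟩ := mem_cone_iff.mp hp
  obtain ⟨t, ht, hmin⟩ := T.exists_min_image c hT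
  set c' : LVec n → ℚ := fun s => c s - if s ∈ T then c t else 0
  have hc' : ∀ s, 0 ≤ c' s := fun s => by
    by_cases hs : s ∈ T
    · simpa [c', hs] using hmin s hs
    · simpa [c', hs] using hc s
  have hsplit : ∑ s ∈ M, c s • toQ s = c t • toQ (∑ s ∈ T, s) + ∑ s ∈ M, c' s • toQ s := by
    simp only [c', sub_smul, Finset.sum_sub_distrib, ite_smul, zero_smul, Finset.sum_ite_mem,
      Finset.inter_eq_right.mpr hTM, toQ_sum, Finset.smul_sum]
    abel
  refine ⟨t, ht, hsplit ▸ add_mem (PointedCone.smul_mem _ (hc t) (toQ_mem_cone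
    (Finset.mem_insert_self _ _))) (Submodule.sum_mem _ fun s hs => ?_)⟩
  by_cases hst : s = t
  · subst hst
    simp [c', ht]
  · exact PointedCone.smul_mem _ (hc' s)
      (toQ_mem_cone (Finset.mem_insert_of_mem (Finset.mem_erase.mpr ⟨hst, hs⟩)))

lemma isPrimitive_of_isUnit_apply {v : LVec n} (i : Fin n) (h : IsUnit (v i)) : IsPrimitive v := by
  refine ⟨fun h0 => by simp [h0] at h, fun k w hkw => ?_⟩
  rw [hkw, Pi.smul_apply, smul_eq_mul] at h
  exact isUnit_of_mul_isUnit_left h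

lemma _root_.IsPrimitive.eq_of_smul_eq_smul {v b : LVec n} (hv : IsPrimitive v) (hb : IsPrimitive b)
    {d m : ℤ} (hd : 0 < d) (hm : 0 < m) (hdm : IsCoprime m d) (h : d • v = m • b) : v = b := by
  obtain ⟨u, w, huw⟩ := hdm
  have hbd : b = d • (u • v + w • b) := by
    calc b = (u * m + w * d) • b := by rw [huw, one_smul]
      _ = d • (u • v + w • b) := by
        rw [add_smul, mul_smul, ← h, smul_add, smul_comm d u, mul_comm w, mul_smul]
  have hd1 : d = 1 := by rcases Int.isUnit_iff.mp (hb.2 d _ hbd) with h1 | h1 <;> omega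
  rw [hd1, one_smul] at h
  have hm1 : m = 1 := by rcases Int.isUnit_iff.mp (hv.2 m _ h) with h1 | h1 <;> omega
  rw [h, hm1, one_smul]

lemma _root_.IsPrimitive.eq_of_toQ_eq_smul {v b : LVec n} (hv : IsPrimitive v) (hb : IsPrimitive b)
    {q : ℚ} (hq : 0 < q) (h : toQ v = q • toQ b) : v = b := by
  refine hv.eq_of_smul_eq_smul hb (d := q.den) (m := q.num) (by positivity)
    (Rat.num_pos.mpr hq) ?_ (funext fun i => ?_)
  · rw [Int.isCoprime_iff_gcd_eq_one]
    exact q.reduced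
  · have hi : (v i : ℚ) = q * b i := congrFun h i
    have : (q.den : ℚ) * v i = q.num * b i := by
      rw [hi, ← mul_assoc, mul_comm (q.den : ℚ), Rat.mul_den_eq_num]
    simpa using (by exact_mod_cast this : (q.den : ℤ) * v i = q.num * b i)

/-- A smooth maximal cone, spanned by the basis `gen` of `ℤ^n`; the dual basis `dual` certifies
that `gen` is a basis and gives coordinates (see `IsDual`). -/
structure Frame (n : ℕ) where
  gen : Fin n → LVec n
  dual : Fin n → LVec n

namespace Frame

variable (f : Frame n)

def IsDual : Prop := ∀ i j, f.dual i ⬝ᵥ f.gen j = if i = j then 1 else 0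

instance : Decidable f.IsDual := by unfold IsDual; infer_instance

def rays : Finset (LVec n) := univ.image f.gen

def genMatrix : Matrix (Fin n) (Fin n) ℤ := Matrix.of fun a i => f.gen i a

def dualMatrix : Matrix (Fin n) (Fin n) ℤ := Matrix.of fun i a => f.dual i a

variable {f}

lemma IsDual.injective (hf : f.IsDual) : Function.Injective f.gen := fun i j hij => by
  by_contra hne
  have h := hf i j
  rw [if_neg hne, ← hij, hf i i, if_pos rfl] at h
  exact one_ne_zero h

lemma IsDual.dotProduct_of_mem_rays (hf : f.IsDual) (i : Fin n) {s : LVec n} (hs : s ∈ f.rays) :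
    f.dual i ⬝ᵥ s = if s = f.gen i then 1 else 0 := by
  obtain ⟨j, -, rfl⟩ := Finset.mem_image.mp hs
  rw [hf i j]
  exact if_congr ⟨fun h => h ▸ rfl, fun h => hf.injective h.symm⟩ rfl rfl

lemma IsDual.genMatrix_mul_dualMatrix (hf : f.IsDual) : f.genMatrix * f.dualMatrix = 1 := by
  refine mul_eq_one_comm.mp (Matrix.ext fun i j => ?_)
  simpa [dualMatrix, genMatrix, Matrix.mul_apply, Matrix.one_apply, dotProduct] using hf i j

lemma IsDual.exists_basis (hf : f.IsDual) : ∃ b : Module.Basis (Fin n) ℤ (LVec n), ⇑b = f.gen := by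
  have h := hf.genMatrix_mul_dualMatrix
  let e : LVec n ≃ₗ[ℤ] LVec n := LinearEquiv.ofLinearMap (Matrix.toLin' f.genMatrix)
    (Matrix.toLin' f.dualMatrix) (by rw [← Matrix.toLin'_mul, h, Matrix.toLin'_one])
    (by rw [← Matrix.toLin'_mul, mul_eq_one_comm.mp h, Matrix.toLin'_one])
  refine ⟨(Pi.basisFun ℤ (Fin n)).map e, funext fun i => ?_⟩
  ext a
  simp [e, Matrix.toLin'_apply, genMatrix]

lemma IsDual.sum_pairing_smul (hf : f.IsDual) (x : Vec n) :
    ∑ i, pairing (f.dual i) x • toQ (f.gen i) = x := by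
  have h : (Int.castRingHom ℚ).mapMatrix f.genMatrix * (Int.castRingHom ℚ).mapMatrix f.dualMatrix
      = 1 := by
    rw [← map_mul, hf.genMatrix_mul_dualMatrix, map_one]
  ext a
  have := congrFun (congrArg (fun A => A.mulVec x) h) a
  simp only [← Matrix.mulVec_mulVec, Matrix.one_mulVec] at this
  rw [← this]
  simp [Matrix.mulVec, dotProduct, pairing, toQ, genMatrix, dualMatrix, mul_comm]

lemma IsDual.mem_cone_iff (hf : f.IsDual) {B : Finset (LVec n)} (hB : B ⊆ f.rays) {x : Vec n} :
    x ∈ cone B ↔ ∀ i, 0 ≤ pairing (f.dual i) x ∧ (f.gen i ∉ B → pairing (f.dual i) x = 0) := by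
  constructor
  · intro hx i
    obtain ⟨c, hc, rfl⟩ := ToricFan.mem_cone_iff.mp hx
    have hcoord : pairing (f.dual i) (∑ s ∈ B, c s • toQ s) =
        if f.gen i ∈ B then c (f.gen i) else 0 := by
      rw [map_sum, ← Finset.sum_ite_eq' B (f.gen i) c]
      refine Finset.sum_congr rfl fun s hs => ?_
      simp [pairing_toQ, hf.dotProduct_of_mem_rays i (hB hs)]
    rw [hcoord]
    split_ifs with h
    · exact ⟨hc _, fun h' => absurd h h'⟩
    · exact ⟨le_rfl, fun _ => rfl⟩
  · intro hx
    rw [← hf.sum_pairing_smul x]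
    refine Submodule.sum_mem _ fun i _ => ?_
    by_cases hi : f.gen i ∈ B
    · exact PointedCone.smul_mem _ (hx i).1 (toQ_mem_cone hi)
    · rw [(hx i).2 hi, zero_smul]
      exact zero_mem _

lemma IsDual.cone_inf_cone (hf : f.IsDual) {B₁ B₂ : Finset (LVec n)} (hB₁ : B₁ ⊆ f.rays)
    (hB₂ : B₂ ⊆ f.rays) : cone B₁ ⊓ cone B₂ = cone (B₁ ∩ B₂) := by
  ext x
  rw [Submodule.mem_inf, hf.mem_cone_iff hB₁, hf.mem_cone_iff hB₂,
    hf.mem_cone_iff (Finset.inter_subset_left.trans hB₁), ← forall_and]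
  refine forall_congr' fun i => ?_
  rw [Finset.mem_inter]
  tauto

lemma IsDual.isFaceOf_cone (hf : f.IsDual) {A B : Finset (LVec n)} (hAB : A ⊆ B)
    (hB : B ⊆ f.rays) : IsFaceOf (cone A : Set (Vec n)) (cone B) := by
  have hA := hAB.trans hB
  refine ⟨∑ i ∈ univ.filter (f.gen · ∉ A), pairing (f.dual i), fun x hx => ?_, ?_⟩
  · rw [LinearMap.sum_apply]
    exact Finset.sum_nonneg fun i _ => ((hf.mem_cone_iff hB).mp hx i).1
  · ext x
    simp only [Set.mem_ofPred_eq, SetLike.mem_coe, LinearMap.sum_apply]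
    constructor
    · intro hx
      refine ⟨cone_mono hAB hx, Finset.sum_eq_zero fun i hi => ?_⟩
      exact ((hf.mem_cone_iff hA).mp hx i).2 (Finset.mem_filter.mp hi).2
    · rintro ⟨hx, hsum⟩
      have hcoord := (hf.mem_cone_iff hB).mp hx
      have hzero := (Finset.sum_eq_zero_iff_of_nonneg fun i _ => (hcoord i).1).mp hsum
      exact (hf.mem_cone_iff hA).mpr fun i =>
        ⟨(hcoord i).1, fun hi => hzero i (Finset.mem_filter.mpr ⟨Finset.mem_univ i, hi⟩)⟩

lemma IsDual.mem_of_toQ_mem_cone (hf : f.IsDual) {B : Finset (LVec n)} (hB : B ⊆ f.rays)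
    {v : LVec n} (hv : v ∈ f.rays ∨ ∃ i, f.dual i ⬝ᵥ v < 0) (h : toQ v ∈ cone B) : v ∈ B := by
  have hcoord := (hf.mem_cone_iff hB).mp h
  rcases hv with hv | ⟨i, hi⟩
  · obtain ⟨j, -, rfl⟩ := Finset.mem_image.mp hv
    by_contra hj
    have := (hcoord j).2 hj
    rw [pairing_toQ, hf j j, if_pos rfl] at this
    norm_num at this
  · have := (hcoord i).1
    rw [pairing_toQ] at this
    exact absurd (by exact_mod_cast this : (0 : ℤ) ≤ _) (not_le.mpr hi)

end Frame

lemma cone_insert_congr (x : LVec n) {A A' : Finset (LVec n)} (h : cone A = cone A') :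
    cone (insert x A) = cone (insert x A') := by
  simp only [cone, Finset.coe_insert, Set.image_insert_eq] at h ⊢
  exact (Submodule.span_insert _ _).trans
    ((congrArg _ h).trans (Submodule.span_insert _ _).symm)

lemma cone_insert_zero (A : Finset (LVec n)) : cone (insert 0 A) = cone A := by
  simp only [cone, Finset.coe_insert, Set.image_insert_eq, toQ_zero]
  exact Submodule.span_insert_zero

@[simp] lemma coneGen_singleton_toQ (v : LVec n) : coneGen {toQ v} = (cone {v} : Set (Vec n)) := by
  rw [← coneGen_image_toQ, Finset.coe_singleton, Set.image_singleton]

def conesOf (MF : Finset (Finset (LVec n))) : Set (Set (Vec n)) :=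
  {σ | ∃ M ∈ MF, ∃ B ⊆ M, σ = cone B}

section conesOf

variable {MF : Finset (Finset (LVec n))}

lemma cone_mem_conesOf {M B : Finset (LVec n)} (hM : M ∈ MF) (hB : B ⊆ M) :
    (cone B : Set (Vec n)) ∈ conesOf MF :=
  ⟨M, hM, B, hB, rfl⟩

lemma conesOf_finite (MF : Finset (Finset (LVec n))) : (conesOf MF).Finite := by
  refine ((MF.biUnion Finset.powerset).finite_toSet.image fun B => (cone B : Set (Vec n))).subset ?_
  rintro σ ⟨M, hM, B, hB, rfl⟩
  exact ⟨B, by simpa using ⟨M, hM, hB⟩, rfl⟩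

lemma mem_gens_conesOf (hprim : ∀ M ∈ MF, ∀ v ∈ M, IsPrimitive v) {M : Finset (LVec n)}
    (hM : M ∈ MF) {v : LVec n} (hv : v ∈ M) : v ∈ gens (conesOf MF) :=
  ⟨hprim M hM v hv, by simpa using cone_mem_conesOf hM (Finset.singleton_subset_iff.mpr hv)⟩

lemma gens_conesOf (hprim : ∀ M ∈ MF, ∀ v ∈ M, IsPrimitive v) :
    gens (conesOf MF) = ↑(MF.biUnion id) := by
  refine Set.Subset.antisymm ?_ fun v hv => ?_
  · rintro v ⟨hv, M, hM, B, hBM, hvB⟩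
    replace hvB : cone {v} = cone B := SetLike.coe_injective (by simpa using hvB)
    obtain ⟨s, hs⟩ : B.Nonempty := by
      refine Finset.nonempty_iff_ne_empty.mpr fun hB => hv.1 (toQ_injective ?_)
      have h := hvB ▸ toQ_mem_cone (Finset.mem_singleton_self v)
      simpa [hB, cone] using h
    obtain ⟨q, hq, hsv⟩ := mem_cone_singleton.mp (hvB ▸ toQ_mem_cone hs)
    have hq0 : q ≠ 0 := by
      rintro rfl
      exact (hprim M hM s (hBM hs)).1 (toQ_injective (by simpa using hsv))
    have hvs : toQ v = q⁻¹ • toQ s := by rw [hsv, smul_smul, inv_mul_cancel₀ hq0, one_smul]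
    rw [hv.eq_of_toQ_eq_smul (hprim M hM s (hBM hs))
      (inv_pos.mpr (lt_of_le_of_ne hq (Ne.symm hq0))) hvs]
    exact Finset.mem_biUnion.mpr ⟨M, hM, hBM hs⟩
  · obtain ⟨M, hM, hvM⟩ := Finset.mem_biUnion.mp hv
    exact mem_gens_conesOf hprim hM hvM

lemma cone_mem_conesOf_iff
    (hrays : ∀ M ∈ MF, ∀ B ⊆ M, ∀ v ∈ MF.biUnion id, toQ v ∈ cone B → v ∈ B)
    {P : Finset (LVec n)} (hP : P ⊆ MF.biUnion id) :
    (cone P : Set (Vec n)) ∈ conesOf MF ↔ ∃ M ∈ MF, P ⊆ M := by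
  refine ⟨fun ⟨M, hM, B, hBM, hPB⟩ => ⟨M, hM, fun p hp => hBM ?_⟩,
    fun ⟨M, hM, hPM⟩ => cone_mem_conesOf hM hPM⟩
  exact hrays M hM B hBM p (hP hp) (hPB ▸ toQ_mem_cone hp : toQ p ∈ (cone B : Set (Vec n)))

lemma isPrimCol_conesOf_iff (hprim : ∀ M ∈ MF, ∀ v ∈ M, IsPrimitive v)
    (hrays : ∀ M ∈ MF, ∀ B ⊆ M, ∀ v ∈ MF.biUnion id, toQ v ∈ cone B → v ∈ B)
    (P : Finset (LVec n)) :
    IsPrimCol (conesOf MF) P ↔ P ⊆ MF.biUnion id ∧ (¬ ∃ M ∈ MF, P ⊆ M) ∧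
      ∀ x ∈ P, ∃ M ∈ MF, P.erase x ⊆ M := by
  rw [IsPrimCol, gens_conesOf hprim, Finset.coe_subset, coneGen_image_toQ]
  refine ⟨fun ⟨hP, hnot, herase⟩ => ⟨hP, ?_, fun x hx => ?_⟩,
    fun ⟨hP, hnot, herase⟩ => ⟨hP, ?_, fun x hx => ?_⟩⟩
  · rwa [← cone_mem_conesOf_iff hrays hP]
  · have := herase x hx
    rwa [coneGen_image_toQ, cone_mem_conesOf_iff hrays ((Finset.erase_subset x P).trans hP)] at this
  · rwa [cone_mem_conesOf_iff hrays hP]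
  · obtain ⟨M, hM, hPM⟩ := herase x hx
    rw [coneGen_image_toQ]
    exact cone_mem_conesOf hM hPM

lemma hasPrimRel_conesOf (hprim : ∀ M ∈ MF, ∀ v ∈ M, IsPrimitive v) {P Y M : Finset (LVec n)}
    (hM : M ∈ MF) (hYM : Y ⊆ M) (hsum : ∑ x ∈ P, x = ∑ y ∈ Y, y) :
    HasPrimRel (conesOf MF) P Y fun _ => 1 :=
  ⟨fun _ hy => mem_gens_conesOf hprim hM (hYM hy), by
    simpa using cone_mem_conesOf hM hYM, fun _ _ => one_pos, by simpa using hsum⟩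

def Separates (w : LVec n) (M₁ M₂ : Finset (LVec n)) : Prop :=
  (∀ v ∈ M₁, 0 ≤ w ⬝ᵥ v ∧ (w ⬝ᵥ v = 0 → v ∈ M₂)) ∧
    ∀ v ∈ M₂, w ⬝ᵥ v ≤ 0 ∧ (w ⬝ᵥ v = 0 → v ∈ M₁)

instance (w : LVec n) (M₁ M₂ : Finset (LVec n)) : Decidable (Separates w M₁ M₂) := by
  unfold Separates; infer_instance

lemma Frame.IsDual.cone_inf_cone_of_separates {f₁ : Frame n} (hf₁ : f₁.IsDual)
    {M₂ : Finset (LVec n)} {w : LVec n} (hw : Separates w f₁.rays M₂) {B₁ B₂ : Finset (LVec n)}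
    (hB₁ : B₁ ⊆ f₁.rays) (hB₂ : B₂ ⊆ M₂) : cone B₁ ⊓ cone B₂ = cone (B₁ ∩ B₂) := by
  refine le_antisymm (fun x hx => ?_) (le_inf (cone_mono Finset.inter_subset_left)
    (cone_mono Finset.inter_subset_right))
  obtain ⟨hx₁, hx₂⟩ := Submodule.mem_inf.mp hx
  have hpos₁ : ∀ s ∈ B₁, 0 ≤ pairing w (toQ s) := fun s hs => by
    simpa [pairing_toQ] using (hw.1 s (hB₁ hs)).1
  have hpos₂ : ∀ s ∈ B₂, 0 ≤ (-pairing w) (toQ s) := fun s hs => by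
    simpa [pairing_toQ] using (hw.2 s (hB₂ hs)).1
  have hzero : pairing w x = 0 := le_antisymm
    (by simpa using apply_nonneg_of_mem_cone hpos₂ hx₂) (apply_nonneg_of_mem_cone hpos₁ hx₁)
  have hC₁ : B₁.filter (fun s => pairing w (toQ s) = 0) ⊆ f₁.rays :=
    (Finset.filter_subset _ _).trans hB₁
  have hC₂ : B₂.filter (fun s => (-pairing w) (toQ s) = 0) ⊆ f₁.rays := fun s hs => by
    rw [Finset.mem_filter] at hs
    exact (hw.2 s (hB₂ hs.1)).2 (by simpa [pairing_toQ] using hs.2)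
  have hmem := (hf₁.cone_inf_cone hC₁ hC₂).le (Submodule.mem_inf.mpr
    ⟨mem_cone_filter_of_apply_eq_zero hpos₁ hx₁ hzero,
      mem_cone_filter_of_apply_eq_zero hpos₂ hx₂ (by simp [hzero])⟩)
  exact cone_mono (Finset.inter_subset_inter (Finset.filter_subset _ _)
    (Finset.filter_subset _ _)) hmem

theorem isSmoothCompleteFan_conesOf
    (hframe : ∀ M ∈ MF, ∃ f : Frame n, f.IsDual ∧ f.rays = M)
    (hsep : ∀ M₁ ∈ MF, ∀ M₂ ∈ MF, ∃ w, Separates w M₁ M₂)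
    (hcover : ∀ x, ∃ M ∈ MF, x ∈ cone M) : IsSmoothCompleteFan (conesOf MF) where
  finite := conesOf_finite MF
  smooth := by
    rintro σ ⟨M, hM, B, hBM, rfl⟩
    obtain ⟨f, hf, rfl⟩ := hframe M hM
    obtain ⟨b, hb⟩ := hf.exists_basis
    refine ⟨b, univ.filter (f.gen · ∈ B), ?_⟩
    have himage : ⇑b '' ↑(univ.filter (f.gen · ∈ B)) = (B : Set (LVec n)) := by
      ext v
      simp only [hb, Finset.coe_filter, Finset.mem_univ, true_and, Set.mem_image,
        Set.mem_ofPred_eq, Finset.mem_coe]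
      refine ⟨fun ⟨i, hi, hiv⟩ => hiv ▸ hi, fun hv => ?_⟩
      obtain ⟨i, -, rfl⟩ := Finset.mem_image.mp (hBM hv)
      exact ⟨i, hv, rfl⟩
    rw [himage, coneGen_image_toQ]
  faces := by
    rintro σ ⟨M, hM, B, hBM, rfl⟩ G hG
    obtain ⟨A, hAB, rfl⟩ := exists_eq_cone_of_isFaceOf hG
    exact cone_mem_conesOf hM (hAB.trans hBM)
  inter := by
    rintro σ ⟨M₁, hM₁, B₁, hB₁, rfl⟩ τ ⟨M₂, hM₂, B₂, hB₂, rfl⟩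
    obtain ⟨f₁, hf₁, rfl⟩ := hframe M₁ hM₁
    obtain ⟨f₂, hf₂, rfl⟩ := hframe M₂ hM₂
    obtain ⟨w, hw⟩ := hsep _ hM₁ _ hM₂
    rw [← Submodule.coe_inf, hf₁.cone_inf_cone_of_separates hw hB₁ hB₂]
    exact ⟨hf₁.isFaceOf_cone Finset.inter_subset_left hB₁,
      hf₂.isFaceOf_cone Finset.inter_subset_right hB₂⟩
  covers := Set.eq_univ_of_forall fun x => by
    obtain ⟨M, hM, hx⟩ := hcover x
    exact ⟨_, cone_mem_conesOf hM subset_rfl, hx⟩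

/-- The maximal cones of the star subdivision at `cone T`. -/
def starMax (MF : Finset (Finset (LVec n))) (T : Finset (LVec n)) : Finset (Finset (LVec n)) :=
  MF.filter (¬ T ⊆ ·) ∪
    (MF.filter (T ⊆ ·)).biUnion fun M => T.image fun t => insert (∑ t ∈ T, t) (M.erase t)

lemma mem_starMax {T M' : Finset (LVec n)} :
    M' ∈ starMax MF T ↔ (M' ∈ MF ∧ ¬ T ⊆ M') ∨
      ∃ M ∈ MF, T ⊆ M ∧ ∃ t ∈ T, insert (∑ t ∈ T, t) (M.erase t) = M' := by
  simp [starMax, and_assoc]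

lemma exists_subset_starMax {T M B : Finset (LVec n)} (hM : M ∈ MF) (hBM : B ⊆ M)
    (hTB : ¬ T ⊆ B) : ∃ M' ∈ starMax MF T, B ⊆ M' := by
  by_cases hTM : T ⊆ M
  · obtain ⟨t, ht, htB⟩ := Finset.not_subset.mp hTB
    exact ⟨_, mem_starMax.mpr (Or.inr ⟨M, hM, hTM, t, ht, rfl⟩), fun s hs =>
      Finset.mem_insert_of_mem (Finset.mem_erase.mpr ⟨fun h => htB (h ▸ hs), hBM hs⟩)⟩
  · exact ⟨M, mem_starMax.mpr (Or.inl ⟨hM, hTM⟩), hBM⟩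

lemma exists_mem_cone_starMax {T : Finset (LVec n)} (hT : T.Nonempty)
    (hcover : ∀ x, ∃ M ∈ MF, x ∈ cone M) (x : Vec n) : ∃ M' ∈ starMax MF T, x ∈ cone M' := by
  obtain ⟨M, hM, hx⟩ := hcover x
  by_cases hTM : T ⊆ M
  · obtain ⟨t, ht, hxt⟩ := exists_mem_cone_insert_sum_erase hT hTM hx
    exact ⟨_, mem_starMax.mpr (Or.inr ⟨M, hM, hTM, t, ht, rfl⟩), hxt⟩
  · exact ⟨M, mem_starMax.mpr (Or.inl ⟨hM, hTM⟩), hx⟩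

lemma cone_subset_cone_iff {T M B : Finset (LVec n)}
    (hray : ∀ M ∈ MF, ∀ B ⊆ M, ∀ t ∈ T, toQ t ∈ cone B → t ∈ B) (hM : M ∈ MF) (hBM : B ⊆ M) :
    (cone T : Set (Vec n)) ⊆ cone B ↔ T ⊆ B :=
  ⟨fun h t ht => hray M hM B hBM t ht (h (toQ_mem_cone ht)), fun h => cone_mono h⟩

lemma starSubdiv_subset_conesOf_starMax {T : Finset (LVec n)}
    (hray : ∀ M ∈ MF, ∀ B ⊆ M, ∀ t ∈ T, toQ t ∈ cone B → t ∈ B) :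
    starSubdiv (conesOf MF) T ⊆ conesOf (starMax MF T) := by
  simp only [starSubdiv, coneGen_image_toQ]
  rintro σ (⟨⟨M, hM, B, hBM, rfl⟩, hσ⟩ | ⟨A, -, ⟨σ₀, ⟨M, hM, B, hBM, rfl⟩, hTσ₀, hA⟩, hTA, rfl⟩)
  · obtain ⟨M', hM', hBM'⟩ :=
      exists_subset_starMax hM hBM (mt (cone_subset_cone_iff hray hM hBM).mpr hσ)
    exact cone_mem_conesOf hM' hBM'
  · obtain ⟨A', hA'B, hAA'⟩ := exists_eq_cone_of_isFaceOf hA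
    obtain ⟨t, ht, htA'⟩ := Finset.not_subset.mp fun h => hTA (hAA' ▸ cone_mono h)
    have hTM := ((cone_subset_cone_iff hray hM hBM).mp hTσ₀).trans hBM
    refine ⟨_, mem_starMax.mpr (Or.inr ⟨M, hM, hTM, t, ht, rfl⟩), insert _ A',
      Finset.insert_subset_insert _ fun s hs => Finset.mem_erase.mpr
        ⟨fun h => htA' (h ▸ hs), hBM (hA'B hs)⟩, ?_⟩
    rw [cone_insert_congr _ (SetLike.coe_injective hAA')]

lemma conesOf_starMax_subset_starSubdiv {T : Finset (LVec n)}
    (hprim : ∀ M ∈ MF, ∀ v ∈ M, IsPrimitive v)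
    (hface : ∀ M ∈ MF, ∀ A ⊆ M, IsFaceOf (cone A : Set (Vec n)) (cone M))
    (hray : ∀ M ∈ MF, ∀ B ⊆ M, ∀ t ∈ T, toQ t ∈ cone B → t ∈ B)
    (hnew : ∀ M ∈ MF, ∑ t ∈ T, t ∉ M) :
    conesOf (starMax MF T) ⊆ starSubdiv (conesOf MF) T := by
  simp only [starSubdiv, coneGen_image_toQ]
  rintro σ ⟨M', hM', B, hBM', rfl⟩
  by_cases hxB : ∑ t ∈ T, t ∈ B
  · right
    obtain ⟨hM'F, -⟩ | ⟨M, hM, hTM, t, ht, rfl⟩ := mem_starMax.mp hM'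
    · exact absurd (hBM' hxB) (hnew M' hM'F)
    have hAM : B.erase (∑ t ∈ T, t) ⊆ M.erase t := by rwa [← Finset.subset_insert_iff]
    have hAM' := hAM.trans (Finset.erase_subset t M)
    refine ⟨B.erase (∑ t ∈ T, t), fun v hv => mem_gens_conesOf hprim hM (hAM' hv),
      ⟨_, cone_mem_conesOf hM subset_rfl, cone_mono hTM, hface M hM _ hAM'⟩, fun h => ?_, ?_⟩
    · exact Finset.notMem_erase t M (hAM ((cone_subset_cone_iff hray hM hAM').mp h ht))
    · rw [Finset.insert_erase hxB]
  · left
    obtain ⟨hM'F, hTM'⟩ | ⟨M, hM, hTM, t, ht, rfl⟩ := mem_starMax.mp hM'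
    · exact ⟨cone_mem_conesOf hM'F hBM',
        mt (cone_subset_cone_iff hray hM'F hBM').mp fun h => hTM' (h.trans hBM')⟩
    · have hBM : B ⊆ M.erase t := by
        rwa [← Finset.erase_eq_of_notMem hxB, ← Finset.subset_insert_iff]
      have hBM'' := hBM.trans (Finset.erase_subset t M)
      refine ⟨cone_mem_conesOf hM hBM'', fun h => ?_⟩
      exact Finset.notMem_erase t M (hBM ((cone_subset_cone_iff hray hM hBM'').mp h ht))

theorem starSubdiv_conesOf {T : Finset (LVec n)} (hprim : ∀ M ∈ MF, ∀ v ∈ M, IsPrimitive v)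
    (hface : ∀ M ∈ MF, ∀ A ⊆ M, IsFaceOf (cone A : Set (Vec n)) (cone M))
    (hray : ∀ M ∈ MF, ∀ B ⊆ M, ∀ t ∈ T, toQ t ∈ cone B → t ∈ B)
    (hnew : ∀ M ∈ MF, ∑ t ∈ T, t ∉ M) :
    starSubdiv (conesOf MF) T = conesOf (starMax MF T) :=
  (starSubdiv_subset_conesOf_starMax hray).antisymm
    (conesOf_starMax_subset_starSubdiv hprim hface hray hnew)

end conesOf

def maxCones (Fs : List (Frame n)) : Finset (Finset (LVec n)) := (Fs.map Frame.rays).toFinset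

section maxCones

variable {Fs : List (Frame n)}

lemma mem_maxCones {M : Finset (LVec n)} : M ∈ maxCones Fs ↔ ∃ f ∈ Fs, f.rays = M := by
  simp [maxCones]

lemma mem_of_toQ_mem_cone_of_mem_maxCones (hdual : ∀ f ∈ Fs, f.IsDual) {V : Finset (LVec n)}
    (hV : ∀ f ∈ Fs, ∀ v ∈ V, v ∈ f.rays ∨ ∃ i, f.dual i ⬝ᵥ v < 0) :
    ∀ M ∈ maxCones Fs, ∀ B ⊆ M, ∀ v ∈ V, toQ v ∈ cone B → v ∈ B := by
  intro M hM B hBM v hv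
  obtain ⟨f, hf, rfl⟩ := mem_maxCones.mp hM
  exact (hdual f hf).mem_of_toQ_mem_cone hBM (hV f hf v hv)

theorem starSubdiv_conesOf_maxCones {T : Finset (LVec n)} (hdual : ∀ f ∈ Fs, f.IsDual)
    (hprim : ∀ f ∈ Fs, ∀ v ∈ f.rays, IsPrimitive v)
    (hT : ∀ f ∈ Fs, ∀ t ∈ T, t ∈ f.rays ∨ ∃ i, f.dual i ⬝ᵥ t < 0)
    (hnew : ∀ f ∈ Fs, ∑ t ∈ T, t ∉ f.rays) :
    starSubdiv (conesOf (maxCones Fs)) T = conesOf (starMax (maxCones Fs) T) := by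
  refine starSubdiv_conesOf (fun M hM => ?_) (fun M hM A hAM => ?_)
    (mem_of_toQ_mem_cone_of_mem_maxCones hdual hT) (fun M hM => ?_) <;>
  obtain ⟨f, hf, rfl⟩ := mem_maxCones.mp hM
  · exact hprim f hf
  · exact (hdual f hf).isFaceOf_cone hAM subset_rfl
  · exact hnew f hf

end maxCones

namespace Frame

def std (n : ℕ) : Frame n := ⟨fun i => Pi.single i 1, fun i => Pi.single i 1⟩

/-- Pivot step: if `f.dual j ⬝ᵥ v = ±1`, replacing `gen j` by `v` gives a dual frame with these
dual vectors. -/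
def exchange (f : Frame n) (j : Fin n) (v : LVec n) : Frame n where
  gen := Function.update f.gen j v
  dual i := if i = j then (f.dual j ⬝ᵥ v) • f.dual j
    else f.dual i - ((f.dual i ⬝ᵥ v) * (f.dual j ⬝ᵥ v)) • f.dual j

/-- The frames of the cones into which the star subdivision at `cone T` cuts `cone f.rays`. -/
def star (f : Frame n) (T : Finset (LVec n)) : List (Frame n) :=
  if T ⊆ f.rays then ((List.finRange n).filter (f.gen · ∈ T)).map (f.exchange · (∑ t ∈ T, t))
  else [f]

/-- Nonnegative on `cone f.rays`, this form cuts out its face spanned by `f.rays ∩ M`. -/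
def faceForm (f : Frame n) (M : Finset (LVec n)) : LVec n :=
  ∑ i ∈ univ.filter (f.gen · ∉ M), f.dual i

end Frame

/-- Small combinations of the two face forms; for `Σ_W` one of them always separates. -/
def separatorCandidates (f₁ f₂ : Frame n) : List (LVec n) :=
  let u₁ := f₁.faceForm f₂.rays
  let u₂ := f₂.faceForm f₁.rays
  [u₁ - u₂, u₁ - 2 • u₂, 2 • u₁ - u₂]

def raysW : Finset (LVec 4) := {e0, e1, e2, e3, e4, e5, e6}

def framesP4 : List (Frame 4) :=
  Frame.std 4 :: (List.finRange 4).map ((Frame.std 4).exchange · e0)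

def framesX : List (Frame 4) := framesP4.flatMap (·.star {e1, e2, e3})

def framesW : List (Frame 4) := framesX.flatMap (·.star {e2, e3, e4})

lemma framesP4_isDual : ∀ f ∈ framesP4, f.IsDual := by decide

lemma framesX_isDual : ∀ f ∈ framesX, f.IsDual := by decide

lemma framesW_isDual : ∀ f ∈ framesW, f.IsDual := by decide

lemma maxCones_framesX : maxCones framesX = starMax (maxCones framesP4) {e1, e2, e3} := by
  decide

lemma maxCones_framesW : maxCones framesW = starMax (maxCones framesX) {e2, e3, e4} := by
  decide

lemma biUnion_maxCones_framesW : (maxCones framesW).biUnion id = raysW := by decide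

lemma isPrimitive_of_mem_raysW : ∀ v ∈ raysW, IsPrimitive v := by
  have h : ∀ v ∈ raysW, ∃ i, v i = 1 ∨ v i = -1 := by decide
  intro v hv
  obtain ⟨i, hi⟩ := h v hv
  exact isPrimitive_of_isUnit_apply i (Int.isUnit_iff.mpr hi)

lemma isPrimitive_of_rays_subset {Fs : List (Frame 4)} (h : ∀ f ∈ Fs, f.rays ⊆ raysW) :
    ∀ f ∈ Fs, ∀ v ∈ f.rays, IsPrimitive v :=
  fun f hf v hv => isPrimitive_of_mem_raysW v (h f hf hv)

lemma isPrimitive_of_mem_maxCones_framesW : ∀ M ∈ maxCones framesW, ∀ v ∈ M, IsPrimitive v :=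
  fun M hM v hv => isPrimitive_of_mem_raysW v
    (biUnion_maxCones_framesW ▸ Finset.mem_biUnion.mpr ⟨M, hM, hv⟩)

lemma sigmaP4_eq : SigmaP4 = conesOf (maxCones framesP4) := by
  have hmax : maxCones framesP4 = ({e0, e1, e2, e3, e4} : Finset (LVec 4)).image
      (({e0, e1, e2, e3, e4} : Finset (LVec 4)).erase ·) := by decide
  ext σ
  simp only [SigmaP4, conesOf, hmax, Set.mem_ofPred_eq, Finset.ssubset_iff_exists_subset_erase,
    Finset.mem_image, coneGen_image_toQ]
  constructor
  · rintro ⟨S, ⟨a, ha, hS⟩, rfl⟩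
    exact ⟨_, ⟨a, ha, rfl⟩, S, hS, rfl⟩
  · rintro ⟨_, ⟨a, ha, rfl⟩, S, hS, rfl⟩
    exact ⟨S, ⟨a, ha, hS⟩, rfl⟩

lemma sigmaX_eq : SigmaX = conesOf (maxCones framesX) := by
  rw [SigmaX, sigmaP4_eq, maxCones_framesX, starSubdiv_conesOf_maxCones framesP4_isDual
    (isPrimitive_of_rays_subset (by decide)) (by decide) (by decide)]

lemma sigmaW_eq : SigmaW = conesOf (maxCones framesW) := by
  rw [SigmaW, sigmaX_eq, maxCones_framesW, starSubdiv_conesOf_maxCones framesX_isDual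
    (isPrimitive_of_rays_subset (by decide)) (by decide) (by decide)]

/-- Write `x` with nonnegative coordinates on `{e₀, …, e₄}`, then use `e₀ + ⋯ + e₄ = 0` to
remove a generator of minimal coordinate. -/
lemma exists_mem_cone_framesP4 (x : Vec 4) : ∃ M ∈ maxCones framesP4, x ∈ cone M := by
  set U : Finset (LVec 4) := {e0, e1, e2, e3, e4}
  set a := ∑ i, |x i|
  have ha : ∀ i, 0 ≤ x i + a := fun i => by
    have := Finset.single_le_sum (fun j _ => abs_nonneg (x j)) (Finset.mem_univ i)
    linarith [neg_abs_le (x i)]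
  have hx : x = a • toQ e0 + (x 0 + a) • toQ e1 + (x 1 + a) • toQ e2 + (x 2 + a) • toQ e3 +
      (x 3 + a) • toQ e4 := by
    funext i
    fin_cases i <;> simp [toQ, e0, e1, e2, e3, e4]
  have hxU : x ∈ cone U := by
    rw [hx]
    refine add_mem (add_mem (add_mem (add_mem ?_ ?_) ?_) ?_) ?_ <;>
      refine PointedCone.smul_mem _ ?_ (toQ_mem_cone (by simp [U]))
    exacts [Finset.sum_nonneg fun i _ => abs_nonneg (x i), ha 0, ha 1, ha 2, ha 3]
  obtain ⟨t, ht, hxt⟩ := exists_mem_cone_insert_sum_erase ⟨e0, by simp [U]⟩ subset_rfl hxU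
  have hsum : ∑ u ∈ U, u = 0 := by decide
  have hmax : ∀ t ∈ U, U.erase t ∈ maxCones framesP4 := by decide
  rw [hsum, cone_insert_zero] at hxt
  exact ⟨_, hmax t ht, hxt⟩

lemma exists_mem_cone_framesW (x : Vec 4) : ∃ M ∈ maxCones framesW, x ∈ cone M := by
  rw [maxCones_framesW]
  refine exists_mem_cone_starMax ⟨e2, by simp⟩ (fun y => ?_) x
  rw [maxCones_framesX]
  exact exists_mem_cone_starMax ⟨e1, by simp⟩ exists_mem_cone_framesP4 y

lemma exists_separates_framesW :
    ∀ M₁ ∈ maxCones framesW, ∀ M₂ ∈ maxCones framesW, ∃ w, Separates w M₁ M₂ := by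
  have hsep : ∀ f₁ ∈ framesW, ∀ f₂ ∈ framesW,
      ∃ w ∈ separatorCandidates f₁ f₂, Separates w f₁.rays f₂.rays := by
    decide
  intro M₁ hM₁ M₂ hM₂
  obtain ⟨f₁, hf₁, rfl⟩ := mem_maxCones.mp hM₁
  obtain ⟨f₂, hf₂, rfl⟩ := mem_maxCones.mp hM₂
  obtain ⟨w, -, hw⟩ := hsep f₁ hf₁ f₂ hf₂
  exact ⟨w, hw⟩

lemma isSmoothCompleteFan_sigmaW : IsSmoothCompleteFan SigmaW := by
  rw [sigmaW_eq]
  refine isSmoothCompleteFan_conesOf (fun M hM => ?_) exists_separates_framesW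
    exists_mem_cone_framesW
  obtain ⟨f, hf, rfl⟩ := mem_maxCones.mp hM
  exact ⟨f, framesW_isDual f hf, rfl⟩

lemma gens_sigmaW : gens SigmaW = ↑raysW := by
  rw [sigmaW_eq, gens_conesOf isPrimitive_of_mem_maxCones_framesW, biUnion_maxCones_framesW]

set_option maxRecDepth 10000 in
lemma isPrimCol_sigmaW_iff (P : Finset (LVec 4)) :
    IsPrimCol SigmaW P ↔ P = {e2, e3, e4} ∨ P = {e1, e2, e3} ∨ P = {e1, e6} ∨
      P = {e0, e4, e5} ∨ P = {e0, e5, e6} := by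
  have hrays := mem_of_toQ_mem_cone_of_mem_maxCones framesW_isDual
    (V := (maxCones framesW).biUnion id) (by rw [biUnion_maxCones_framesW]; decide)
  have hsubsets : ∀ P ∈ raysW.powerset,
      ((¬ ∃ M ∈ maxCones framesW, P ⊆ M) ∧ ∀ x ∈ P, ∃ M ∈ maxCones framesW, P.erase x ⊆ M) ↔
        (P = {e2, e3, e4} ∨ P = {e1, e2, e3} ∨ P = {e1, e6} ∨
          P = {e0, e4, e5} ∨ P = {e0, e5, e6}) := by
    decide
  rw [sigmaW_eq, isPrimCol_conesOf_iff isPrimitive_of_mem_maxCones_framesW hrays,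
    biUnion_maxCones_framesW]
  by_cases hP : P ⊆ raysW
  · simpa [hP] using hsubsets P (Finset.mem_powerset.mpr hP)
  · refine iff_of_false (fun h => hP h.1) ?_
    rintro (rfl | rfl | rfl | rfl | rfl) <;> exact hP (by decide)

lemma hasPrimRel_sigmaW {P Y : Finset (LVec 4)} (hY : ∃ M ∈ maxCones framesW, Y ⊆ M)
    (hsum : ∑ x ∈ P, x = ∑ y ∈ Y, y) : HasPrimRel SigmaW P Y fun _ => 1 := by
  obtain ⟨M, hM, hYM⟩ := hY
  rw [sigmaW_eq]
  exact hasPrimRel_conesOf isPrimitive_of_mem_maxCones_framesW hM hYM hsum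

end ToricFan

/-- The fan `Σ_W` is a smooth complete fan in `ℤ^4` with `G(Σ_W) = {e₀,…,e₆}`,
whose primitive collections are exactly `{e₂,e₃,e₄}`, `{e₁,e₂,e₃}`, `{e₁,e₆}`,
`{e₀,e₄,e₅}`, `{e₀,e₅,e₆}`, with primitive relations `e₂+e₃+e₄ = e₆`,
`e₁+e₂+e₃ = e₅`, `e₁+e₆ = e₄+e₅`, `e₀+e₄+e₅ = 0`, `e₀+e₅+e₆ = e₂+e₃`.
The primitive collection `{e₁,e₆}` has degree 0, so `Σ_W` is not Fano. -/
theorem sigmaW_not_fano :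
    IsSmoothCompleteFan SigmaW ∧
    gens SigmaW = {e0, e1, e2, e3, e4, e5, e6} ∧
    (∀ P : Finset (LVec 4), IsPrimCol SigmaW P ↔
      (P = {e2, e3, e4} ∨ P = {e1, e2, e3} ∨ P = {e1, e6} ∨
       P = {e0, e4, e5} ∨ P = {e0, e5, e6})) ∧
    HasPrimRel SigmaW {e2, e3, e4} {e6} (fun _ => 1) ∧
    HasPrimRel SigmaW {e1, e2, e3} {e5} (fun _ => 1) ∧
    HasPrimRel SigmaW {e1, e6} {e4, e5} (fun _ => 1) ∧
    HasPrimRel SigmaW {e0, e4, e5} ∅ (fun _ => 1) ∧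
    HasPrimRel SigmaW {e0, e5, e6} {e2, e3} (fun _ => 1) ∧
    degOf ({e1, e6} : Finset (LVec 4)) {e4, e5} (fun _ => 1) = 0 ∧
    ¬ IsFano SigmaW := by
  open ToricFan in
  have hrel : HasPrimRel SigmaW {e1, e6} {e4, e5} fun _ => 1 :=
    hasPrimRel_sigmaW (by decide) (by decide)
  have hdeg : degOf ({e1, e6} : Finset (LVec 4)) {e4, e5} (fun _ => 1) = 0 := by decide
  refine ⟨isSmoothCompleteFan_sigmaW, by simp [gens_sigmaW, raysW], isPrimCol_sigmaW_iff,
    hasPrimRel_sigmaW (by decide) (by decide), hasPrimRel_sigmaW (by decide) (by decide), hrel,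
    hasPrimRel_sigmaW (by decide) (by decide), hasPrimRel_sigmaW (by decide) (by decide), hdeg,
    fun hFano => ?_⟩
  have := hFano _ _ _ ((isPrimCol_sigmaW_iff _).mpr (by simp)) hrel
  rw [hdeg] at this
  exact lt_irrefl 0 this
end

section
/- Let Σ' be a smooth complete fan in ℤ^n, let τ be a cone of Σ' with primitive generators x_1, …, x_h where h ≥ 2, and let Σ be the star subdivision of Σ' at τ, with new ray generated by x = x_1 + ⋯ + x_h. Then P = {x_1, …, x_h} is a primitive collection of Σ whose primitive relation is x_1 + ⋯ + x_h = x, of degree h − 1. (This is the primitive relation associated to a smooth equivariant blow-up; it is the numerical class of a ℙ^1 contained in a fiber of the blow-down.) -/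
/-!
Smoothness writes the cone of `T` as the cone over `B '' I` for a `ℤ`-basis `B`; each `t ∈ T`
spans a ray of the fan, which is then a face of this simplicial cone, so `T = B '' I`. In
`B`-coordinates `x = ∑ i ∈ I, B i` has coordinate `1` on `I`, hence is primitive. The one real
point is that `cone T` is not a new cone `cone ({x} ∪ A)`: pick `B i ∉ cone A` and `j ∈ I`,
`j ≠ i` (this is where `h ≥ 2` enters); the `j`-th coordinate is `≥ 0` on `A`, `1` on `x` and
`0` on `B i`, so any expression of `B i` in `cone ({x} ∪ A)` gives `x` the coefficient `0`.
-/

open Module Submodule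

variable {n : ℕ}

theorem coneGen_eq_hull (S : Set (Vec n)) : coneGen S = PointedCone.hull ℚ S := by
  ext y
  constructor
  · rintro ⟨T, c, hTS, hc, rfl⟩
    exact sum_mem fun s hs => smul_mem _ (⟨c s, hc s⟩ : {c : ℚ // 0 ≤ c}) (subset_span (hTS hs))
  · intro hy
    obtain ⟨c, hcS, hc, rfl⟩ := PointedCone.mem_hull_set.mp hy
    exact ⟨c.support, c, hcS, hc, rfl⟩

theorem mem_coneGen_singleton {v y : Vec n} : y ∈ coneGen {v} ↔ ∃ c : ℚ, 0 ≤ c ∧ c • v = y := by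
  rw [coneGen_eq_hull, SetLike.mem_coe, mem_span_singleton]
  exact ⟨fun ⟨c, hc⟩ => ⟨c, c.2, hc⟩, fun ⟨c, hc, h⟩ => ⟨⟨c, hc⟩, h⟩⟩

theorem subset_coneGen (S : Set (Vec n)) : S ⊆ coneGen S := by
  simpa only [coneGen_eq_hull] using subset_span

theorem coneGen_subset_coneGen {S S' : Set (Vec n)} (h : S ⊆ coneGen S') :
    coneGen S ⊆ coneGen S' := by
  simp only [coneGen_eq_hull] at h ⊢
  exact span_le.mpr h

theorem coneGen_mono {S S' : Set (Vec n)} (h : S ⊆ S') : coneGen S ⊆ coneGen S' :=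
  coneGen_subset_coneGen (h.trans (subset_coneGen S'))

theorem coneGen_empty : coneGen (∅ : Set (Vec n)) = {0} := by
  simp [coneGen_eq_hull]

theorem nonneg_of_mem_coneGen {u : Vec n →ₗ[ℚ] ℚ} {A : Set (Vec n)} (hA : ∀ a ∈ A, 0 ≤ u a)
    {y : Vec n} (hy : y ∈ coneGen A) : 0 ≤ u y := by
  rw [coneGen_eq_hull, SetLike.mem_coe] at hy
  induction hy using span_induction with
  | mem y hy => exact hA y hy
  | zero => simp
  | add y z _ _ hy hz => rw [map_add]; exact add_nonneg hy hz
  | smul c y _ hy =>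
    obtain ⟨c, hc⟩ := c
    rw [Nonneg.mk_smul, map_smul, smul_eq_mul]
    exact mul_nonneg hc hy

theorem mem_coneGen_of_mem_coneGen_insert {u : Vec n →ₗ[ℚ] ℚ} {A : Set (Vec n)} {x v : Vec n}
    (hA : ∀ a ∈ A, 0 ≤ u a) (hx : 0 < u x) (hv : v ∈ coneGen (insert x A)) (huv : u v ≤ 0) :
    v ∈ coneGen A := by
  rw [coneGen_eq_hull, SetLike.mem_coe, mem_span_insert] at hv
  obtain ⟨⟨c, hc⟩, z, hz, rfl⟩ := hv
  have hz' : z ∈ coneGen A := by rwa [coneGen_eq_hull]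
  rw [map_add, Nonneg.mk_smul, map_smul, smul_eq_mul] at huv
  have hc0 : c = 0 := by nlinarith [nonneg_of_mem_coneGen hA hz']
  rwa [Nonneg.mk_smul, hc0, zero_smul, zero_add]

theorem Module.Basis.eq_sum_repr_of_support_subset {ι R M : Type*} [Semiring R] [AddCommMonoid M]
    [Module R M] (b : Basis ι R M) {I : Finset ι} {y : M} (hy : ∀ i ∉ I, b.repr y i = 0) :
    y = ∑ i ∈ I, b.repr y i • b i := by
  conv_lhs => rw [← b.linearCombination_repr y, Finsupp.linearCombination_apply]
  refine Finsupp.sum_of_support_subset _ (fun i hi => ?_) _ fun i _ => zero_smul R (b i)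
  by_contra h
  exact (Finsupp.mem_support_iff.mp hi) (hy i h)

section BasisCone

variable {ι : Type*} (b : Basis ι ℚ (Vec n))

theorem mem_coneGen_basis_iff (I : Finset ι) {y : Vec n} :
    y ∈ coneGen (b '' I) ↔ (∀ i, 0 ≤ b.repr y i) ∧ ∀ i ∉ I, b.repr y i = 0 := by
  constructor
  · intro hy
    refine ⟨fun i => nonneg_of_mem_coneGen (u := b.coord i) ?_ hy, fun i hi => ?_⟩
    · rintro _ ⟨j, -, rfl⟩
      classical
      rw [b.coord_apply, b.repr_self_apply]
      split_ifs <;> norm_num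
    · rw [coneGen_eq_hull] at hy
      have hsupp := b.mem_span_image.mp (PointedCone.hull_le_span ℚ _ hy)
      exact Finsupp.notMem_support_iff.mp fun h => hi (hsupp h)
  · rintro ⟨hnonneg, hsupp⟩
    rw [b.eq_sum_repr_of_support_subset hsupp, coneGen_eq_hull]
    exact sum_mem fun i hi =>
      smul_mem _ (⟨_, hnonneg i⟩ : {c : ℚ // 0 ≤ c}) (subset_span ⟨i, hi, rfl⟩)

theorem isFaceOf_coneGen_basis {I J : Finset ι} (hJI : J ⊆ I) :
    IsFaceOf (coneGen (b '' J)) (coneGen (b '' I)) := by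
  classical
  refine ⟨∑ i ∈ I \ J, b.coord i, fun y hy => ?_, ?_⟩
  · simp only [LinearMap.coe_sum, Finset.sum_apply, Basis.coord_apply]
    exact Finset.sum_nonneg fun i _ => ((mem_coneGen_basis_iff b I).mp hy).1 i
  · ext y
    simp only [Set.mem_ofPred_eq, LinearMap.coe_sum, Finset.sum_apply, Basis.coord_apply,
      mem_coneGen_basis_iff]
    constructor
    · rintro ⟨hnonneg, hsupp⟩
      exact ⟨⟨hnonneg, fun i hi => hsupp i (mt (@hJI i) hi)⟩,
        Finset.sum_eq_zero fun i hi => hsupp i (Finset.mem_sdiff.mp hi).2⟩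
    · rintro ⟨⟨hnonneg, hsupp⟩, hsum⟩
      refine ⟨hnonneg, fun i hiJ => ?_⟩
      by_cases hiI : i ∈ I
      · exact (Finset.sum_eq_zero_iff_of_nonneg fun j _ => hnonneg j).mp hsum i
          (Finset.mem_sdiff.mpr ⟨hiI, hiJ⟩)
      · exact hsupp i hiI

theorem IsFaceOf.basis_mem {I : Finset ι} {G : Set (Vec n)} (hG : IsFaceOf G (coneGen (b '' I)))
    {y : Vec n} (hy : y ∈ G) {i : ι} (hi : b.repr y i ≠ 0) : b i ∈ G := by
  obtain ⟨u, hu, rfl⟩ := hG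
  obtain ⟨hyσ, huy⟩ := hy
  obtain ⟨hnonneg, hsupp⟩ := (mem_coneGen_basis_iff b I).mp hyσ
  have hiI : i ∈ I := by_contra fun h => hi (hsupp i h)
  have hbσ : ∀ j ∈ I, b j ∈ coneGen (b '' I) := fun j hj => subset_coneGen _ ⟨j, hj, rfl⟩
  rw [b.eq_sum_repr_of_support_subset hsupp, map_sum] at huy
  simp only [map_smul, smul_eq_mul] at huy
  have := (Finset.sum_eq_zero_iff_of_nonneg fun j hj =>
    mul_nonneg (hnonneg j) (hu _ (hbσ j hj))).mp huy i hiI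
  exact ⟨hbσ i hiI, (mul_eq_zero.mp this).resolve_left hi⟩

end BasisCone

def toQLin (n : ℕ) : LVec n →ₗ[ℤ] Vec n := .pi fun i => Algebra.linearMap ℤ ℚ ∘ₗ .proj i

instance : IsLocalizedModule (nonZeroDivisors ℤ) (toQLin n) :=
  IsLocalizedModule.pi _ fun _ => Algebra.linearMap ℤ ℚ

theorem toQ_injective : Function.Injective (toQ (n := n)) :=
  fun _ _ h => funext fun i => by simpa [toQ] using congrFun h i

theorem toQ_eq_zero_iff {v : LVec n} : toQ v = 0 ↔ v = 0 :=
  (injective_iff_map_eq_zero' (toQLin n)).mp toQ_injective v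

section LatticeBasis

variable (B : Basis (Fin n) ℤ (LVec n))

noncomputable def ratBasis : Basis (Fin n) ℚ (Vec n) :=
  B.ofIsLocalizedModule ℚ (nonZeroDivisors ℤ) (toQLin n)

theorem ratBasis_apply (i : Fin n) : ratBasis B i = toQ (B i) :=
  B.ofIsLocalizedModule_apply ℚ (nonZeroDivisors ℤ) (toQLin n) i

theorem ratBasis_repr_toQ (v : LVec n) (i : Fin n) :
    (ratBasis B).repr (toQ v) i = B.repr v i :=
  B.ofIsLocalizedModule_repr_apply ℚ (nonZeroDivisors ℤ) (toQLin n) v i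

theorem image_toQ_image_basis (I : Set (Fin n)) : toQ '' (B '' I) = ratBasis B '' I := by
  rw [Set.image_image]
  exact Set.image_congr fun i _ => (ratBasis_apply B i).symm

theorem toQ_basis_mem_coneGen_iff {i : Fin n} {J : Finset (Fin n)} :
    toQ (B i) ∈ coneGen (toQ '' (B '' J)) ↔ i ∈ J := by
  rw [image_toQ_image_basis, ← ratBasis_apply, mem_coneGen_basis_iff]
  simp only [Basis.repr_self, Finsupp.single_apply]
  constructor
  · intro h
    by_contra hi
    simpa using h.2 i hi
  · intro hi
    refine ⟨fun j => by split_ifs <;> norm_num, fun j hj => if_neg ?_⟩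
    rintro rfl
    exact hj hi

theorem isPrimitive_of_repr_eq_one {v : LVec n} {i : Fin n} (h : B.repr v i = 1) :
    IsPrimitive v := by
  refine ⟨fun hv => by simp [hv] at h, fun k w hkw => ?_⟩
  rw [hkw, map_smul, Finsupp.smul_apply, smul_eq_mul] at h
  exact IsUnit.of_mul_eq_one _ h

theorem isPrimitive_basis (i : Fin n) : IsPrimitive (B i) :=
  isPrimitive_of_repr_eq_one B (i := i) (by simp)

theorem eq_basis_of_basis_mem_ray {s : LVec n} (hs : IsPrimitive s) {i : Fin n}
    (h : toQ (B i) ∈ coneGen {toQ s}) : s = B i := by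
  classical
  obtain ⟨d, hd, hds⟩ := mem_coneGen_singleton.mp h
  have hcoord (j : Fin n) : d * B.repr s j = if i = j then 1 else 0 := by
    simpa [ratBasis_repr_toQ, Finsupp.single_apply, apply_ite (Int.cast : ℤ → ℚ)] using
      congrArg (fun y => (ratBasis B).repr y j) hds
  have hdi : d * B.repr s i = 1 := by simpa using hcoord i
  have hd0 : d ≠ 0 := left_ne_zero_of_mul_eq_one hdi
  have hs_eq : s = B.repr s i • B i := by
    refine B.ext_elem fun j => ?_
    rw [map_smul, Finsupp.smul_apply, B.repr_self_apply, smul_eq_mul]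
    split_ifs with hij
    · rw [hij, mul_one]
    · have := hcoord j
      rw [if_neg hij] at this
      rw [mul_zero]
      exact_mod_cast (mul_eq_zero.mp this).resolve_left hd0
  have hpos : 0 < B.repr s i := by
    have : (0 : ℚ) < B.repr s i := pos_of_mul_pos_right (hdi ▸ one_pos) hd
    exact_mod_cast this
  rcases Int.isUnit_iff.mp (hs.2 _ _ hs_eq) with h1 | h1
  · rw [hs_eq, h1, one_smul]
  · omega

end LatticeBasis

theorem IsSmoothCompleteFan.isFaceOf_ray {F : Set (Set (Vec n))} (hF : IsSmoothCompleteFan F)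
    {S : Set (Vec n)} (hS : coneGen S ∈ F) {s : LVec n} (hs : s ∈ gens F)
    (hsS : toQ s ∈ coneGen S) : IsFaceOf (coneGen {toQ s}) (coneGen S) := by
  have hray : coneGen {toQ s} ∩ coneGen S = coneGen {toQ s} :=
    Set.inter_eq_left.mpr (coneGen_subset_coneGen (Set.singleton_subset_iff.mpr hsS))
  simpa only [hray] using (hF.inter _ hs.2 _ hS).2

theorem IsSmoothCompleteFan.eq_image_basis_of_coneGen_eq {F : Set (Set (Vec n))}
    (hF : IsSmoothCompleteFan F) {S : Finset (LVec n)} (hS : ↑S ⊆ gens F)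
    (hSF : coneGen (toQ '' ↑S) ∈ F) {B : Basis (Fin n) ℤ (LVec n)} {I : Finset (Fin n)}
    (hSB : coneGen (toQ '' ↑S) = coneGen (toQ '' (B '' I))) : S = I.image B := by
  have hmem {s : LVec n} (hs : s ∈ S) : toQ s ∈ coneGen (toQ '' ↑S) :=
    subset_coneGen _ ⟨s, hs, rfl⟩
  have hSI : ↑S ⊆ B '' I := by
    intro s hs
    have hface := hF.isFaceOf_ray hSF (hS hs) (hmem hs)
    rw [hSB, image_toQ_image_basis] at hface
    obtain ⟨i, hi⟩ : ∃ i, (ratBasis B).repr (toQ s) i ≠ 0 := by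
      by_contra! h
      exact (hS hs).1.1 (toQ_eq_zero_iff.mp ((ratBasis B).repr.map_eq_zero_iff.mp (Finsupp.ext h)))
    have hsi : s = B i := eq_basis_of_basis_mem_ray B (hS hs).1
      (ratBasis_apply B i ▸ hface.basis_mem _ (subset_coneGen _ rfl) hi)
    subst hsi
    exact ⟨i, (toQ_basis_mem_coneGen_iff B).mp (hSB ▸ hmem hs), rfl⟩
  refine Finset.coe_injective (Set.Subset.antisymm (by rwa [Finset.coe_image]) ?_)
  rintro _ hBi
  obtain ⟨i, hi, rfl⟩ := Finset.mem_image.mp hBi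
  by_contra hiS
  have hSIi : ↑S ⊆ B '' ↑(I.erase i) := by
    intro s hs
    obtain ⟨j, hj, rfl⟩ := hSI hs
    exact ⟨j, Finset.mem_erase.mpr ⟨fun hji => hiS (hji ▸ hs), hj⟩, rfl⟩
  have := coneGen_mono (Set.image_mono hSIi)
    (hSB ▸ subset_coneGen _ ⟨B i, ⟨i, hi, rfl⟩, rfl⟩ : toQ (B i) ∈ coneGen (toQ '' ↑S))
  exact Finset.notMem_erase i I ((toQ_basis_mem_coneGen_iff B).mp this)

section StarSubdiv

variable {F : Set (Set (Vec n))} {B : Basis (Fin n) ℤ (LVec n)} {I : Finset (Fin n)}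

theorem coneGen_image_basis :
    coneGen (toQ '' ↑(I.image B)) = coneGen (ratBasis B '' I) := by
  rw [Finset.coe_image, image_toQ_image_basis]

theorem repr_sum_image_basis (j : Fin n) :
    B.repr (∑ t ∈ I.image B, t) j = if j ∈ I then 1 else 0 := by
  classical
  rw [Finset.sum_image B.injective.injOn, map_sum, Finset.sum_apply']
  simp_rw [B.repr_self_apply]
  exact Finset.sum_ite_eq' I j (fun _ => 1)

theorem basis_mem_gens_starSubdiv {i : Fin n} (hBi : B i ∈ gens F)
    (hI : 2 ≤ I.card) : B i ∈ gens (starSubdiv F (I.image B)) := by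
  refine ⟨hBi.1, Or.inl ⟨hBi.2, fun hsub => ?_⟩⟩
  obtain ⟨j, hj, hji⟩ := Finset.exists_mem_ne hI i
  have hBj : toQ (B j) ∈ coneGen (toQ '' ↑(I.image B)) :=
    subset_coneGen _ ⟨B j, Finset.mem_image_of_mem B hj, rfl⟩
  exact hji (B.injective (eq_basis_of_basis_mem_ray B (isPrimitive_basis B i) (hsub hBj))).symm

theorem coneGen_notMem_starSubdiv (hI : 2 ≤ I.card) :
    coneGen (toQ '' ↑(I.image B)) ∉ starSubdiv F (I.image B) := by
  rintro (⟨-, hnot⟩ | ⟨A, -, -, hnot, hcone⟩)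
  · exact hnot subset_rfl
  obtain ⟨_, ⟨t, ht, rfl⟩, htA⟩ := Set.not_subset.mp (mt coneGen_subset_coneGen hnot)
  obtain ⟨i, hi, rfl⟩ := Finset.mem_image.mp ht
  obtain ⟨j, hj, hji⟩ := Finset.exists_mem_ne hI i
  rw [Finset.coe_insert, Set.image_insert_eq] at hcone
  have hA (a : Vec n) (ha : a ∈ toQ '' ↑A) : 0 ≤ (ratBasis B).coord j a := by
    have : a ∈ coneGen (ratBasis B '' I) := by
      rw [← coneGen_image_basis, hcone]
      exact subset_coneGen _ (Set.mem_insert_of_mem _ ha)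
    exact ((mem_coneGen_basis_iff _ I).mp this).1 j
  have hBi : toQ (B i) ∈ coneGen (insert (toQ (∑ t ∈ I.image B, t)) (toQ '' ↑A)) := by
    rw [← hcone]
    exact subset_coneGen _ ⟨B i, ht, rfl⟩
  refine htA (mem_coneGen_of_mem_coneGen_insert (u := (ratBasis B).coord j) hA ?_ hBi ?_)
  · rw [Basis.coord_apply, ratBasis_repr_toQ, repr_sum_image_basis, if_pos hj]
    exact one_pos
  · simp [ratBasis_repr_toQ, hji]

theorem coneGen_erase_mem_starSubdiv (hF : IsSmoothCompleteFan F)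
    (hcone : coneGen (toQ '' ↑(I.image B)) ∈ F) {i : Fin n} (hi : i ∈ I) :
    coneGen (toQ '' ↑((I.image B).erase (B i))) ∈ starSubdiv F (I.image B) := by
  classical
  rw [← Finset.image_erase B.injective, Finset.coe_image] at *
  refine Or.inl ⟨hF.faces _ hcone _ ?_, fun hsub => ?_⟩
  · rw [image_toQ_image_basis, image_toQ_image_basis]
    exact isFaceOf_coneGen_basis _ (Finset.erase_subset i I)
  · exact Finset.notMem_erase i I ((toQ_basis_mem_coneGen_iff B).mp
      (hsub (subset_coneGen _ ⟨B i, Finset.mem_image_of_mem B hi, rfl⟩)))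

theorem sum_mem_gens_starSubdiv (hcone : coneGen (toQ '' ↑(I.image B)) ∈ F) (hI : I.Nonempty) :
    ∑ t ∈ I.image B, t ∈ gens (starSubdiv F (I.image B)) := by
  obtain ⟨i, hi⟩ := hI
  refine ⟨isPrimitive_of_repr_eq_one B (i := i) (by rw [repr_sum_image_basis, if_pos hi]), ?_⟩
  refine Or.inr ⟨∅, by simp, ⟨_, hcone, subset_rfl, ?_⟩, fun hsub => ?_, by simp⟩
  · rw [coneGen_image_basis]
    simpa using isFaceOf_coneGen_basis (ratBasis B) (Finset.empty_subset I)
  · have := hsub (subset_coneGen _ ⟨B i, Finset.mem_image_of_mem B hi, rfl⟩)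
    rw [Finset.coe_empty, Set.image_empty, coneGen_empty, Set.mem_singleton_iff,
      toQ_eq_zero_iff] at this
    exact B.ne_zero i this

end StarSubdiv

/-- The primitive relation associated to a smooth equivariant blow-up: if `Σ` is
the star subdivision of the smooth complete fan `Σ'` at a cone with primitive
generators `x₁, …, x_h` (`h ≥ 2`) and new ray generated by `x = x₁ + ⋯ + x_h`,
then `P = {x₁, …, x_h}` is a primitive collection of `Σ` whose primitive relation is
`x₁ + ⋯ + x_h = x`, of degree `h - 1`. -/
theorem blowup_primitive_relation {n : ℕ} (F : Set (Set (Vec n)))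
    (T : Finset (LVec n)) (hF : IsSmoothCompleteFan F)
    (hT : (↑T : Set (LVec n)) ⊆ gens F) (hcard : 2 ≤ T.card)
    (hcone : coneGen (toQ '' ↑T) ∈ F) :
    IsPrimCol (starSubdiv F T) T ∧
    HasPrimRel (starSubdiv F T) T {∑ t ∈ T, t} (fun _ => 1) ∧
    degOf T ({∑ t ∈ T, t} : Finset (LVec n)) (fun _ => 1) = (T.card : ℤ) - 1 := by
  obtain ⟨B, I, hBI⟩ := hF.smooth _ hcone
  obtain rfl : T = I.image B := hF.eq_image_basis_of_coneGen_eq hT hcone hBI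
  rw [Finset.card_image_of_injective I B.injective] at hcard
  have hsum := sum_mem_gens_starSubdiv hcone (Finset.card_pos.mp (by omega))
  refine ⟨⟨?_, coneGen_notMem_starSubdiv hcard, ?_⟩, ⟨?_, ?_, fun _ _ => one_pos, by simp⟩,
    by simp [degOf]⟩
  · rintro _ ht
    obtain ⟨i, -, rfl⟩ := Finset.mem_image.mp ht
    exact basis_mem_gens_starSubdiv (hT ht) hcard
  · intro t ht
    obtain ⟨i, hi, rfl⟩ := Finset.mem_image.mp ht
    exact coneGen_erase_mem_starSubdiv hF hcone hi
  · simpa using hsum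
  · simpa using hsum.2
end
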